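/- Let Q be a divisible commutative quantale and b ∈ Q. Then b is a unit for the smooth slice multiplication: for every x ≤ b, b ⊗_b x = x, i.e. b ⊗ (b ⧵ b) ⊗ (b ⧵ x) = x. -/

import Mathlib

/-- Residuation in a quantale: `a ⧵ b = sSup {c | a * c ≤ b}`. -/
def res {Q : Type*} [Mul Q] [CompleteLattice Q] (a b : Q) : Q := sSup {c | a * c ≤ b}

/-- The smooth slice multiplication on `[⊥, b]`: `x ⊗_b y = b * (b ⧵ x) * (b ⧵ y)`. -/
def smul {Q : Type*} [Mul Q] [CompleteLattice Q] (b x y : Q) : Q := b * res b x * res b y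

section Residuation

variable {Q : Type*} [Semigroup Q] [CompleteLattice Q] [IsQuantale Q] {b x c : Q}

-- `res b x` is definitionally Mathlib's right residuation `b ⇨ᵣ x`.
lemma le_res_iff_mul_le : c ≤ res b x ↔ b * c ≤ x :=
  Quantale.rightMulResiduation_le_iff_mul_le

lemma mul_res_le : b * res b x ≤ x :=
  le_res_iff_mul_le.1 le_rfl

lemma mul_res_of_dvd (h : b ∣ x) : b * res b x = x := by
  obtain ⟨c, rfl⟩ := h
  exact le_antisymm mul_res_le (mul_le_mul_right (le_res_iff_mul_le.2 le_rfl) b)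

end Residuation

/-- In a divisible commutative quantale, `b` is a unit for the smooth slice
multiplication `⊗_b` on `[⊥, b]`. -/
theorem smooth_slice_unit {Q : Type*} [CommSemigroup Q] [CompleteLattice Q] [IsQuantale Q]
    (hdiv : ∀ a b : Q, a ≤ b → ∃ c, a = b * c)
    {b x : Q} (hx : x ≤ b) :
    smul b b x = x := by
  rw [smul, mul_res_of_dvd (hdiv b b le_rfl), mul_res_of_dvd (hdiv x b hx)]
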